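/- For the standard normal CDF Φ, the function v ↦ (log Φ(v))'' is strictly negative for all real v; equivalently, log Φ is strictly concave on ℝ. -/

import Mathlib

/-- The standard normal density. -/
noncomputable def stdPhi (x : ℝ) : ℝ := Real.exp (-x ^ 2 / 2) / Real.sqrt (2 * Real.pi)

/-- The standard normal cumulative distribution function. -/
noncomputable def stdCDF (x : ℝ) : ℝ := ∫ u in Set.Iic x, stdPhi u

open Real MeasureTheory Set Filter

lemma stdPhi_pos (x : ℝ) : 0 < stdPhi x :=
  div_pos (exp_pos _) (Real.sqrt_pos.2 (by positivity))

lemma stdPhi_eq : stdPhi = fun x => Real.exp (-(1/2) * x ^ 2) * (Real.sqrt (2 * Real.pi))⁻¹ := by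
  funext x; rw [stdPhi, div_eq_mul_inv]; ring_nf

lemma integrable_stdPhi : Integrable stdPhi := by
  rw [stdPhi_eq]
  exact (integrable_exp_neg_mul_sq (by norm_num : (0:ℝ) < 1/2)).mul_const _

lemma continuous_stdPhi : Continuous stdPhi := by
  rw [stdPhi_eq]
  exact ((Real.continuous_exp.comp (by continuity)).mul continuous_const)

lemma hasDerivAt_stdPhi (x : ℝ) : HasDerivAt stdPhi (-x * stdPhi x) x := by
  rw [stdPhi_eq]
  have h0 : HasDerivAt (fun x : ℝ => -(1/2) * x ^ 2) (-(1/2) * (↑2 * x ^ 1)) x :=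
    (hasDerivAt_pow 2 x).const_mul _
  have h1 : HasDerivAt (fun x : ℝ => -(1/2) * x ^ 2) (-x) x := by
    convert h0 using 1; norm_num; ring
  have h2 := (h1.exp).mul_const (Real.sqrt (2 * Real.pi))⁻¹
  exact h2.congr_deriv (by ring)

lemma tendsto_stdPhi_atBot : Tendsto stdPhi atBot (nhds 0) := by
  rw [stdPhi_eq]
  have hsq : Tendsto (fun x : ℝ => x ^ 2) atBot atTop := by
    have habs : Tendsto (fun x : ℝ => |x|) atBot atTop := tendsto_abs_atBot_atTop
    have hpow : Tendsto (fun y : ℝ => y ^ 2) atTop atTop := tendsto_pow_atTop two_ne_zero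
    refine (hpow.comp habs).congr fun x => ?_
    simp [Function.comp, sq_abs]
  have h1 : Tendsto (fun x : ℝ => -(1/2) * x ^ 2) atBot atBot := by
    have := tendsto_neg_atTop_atBot.comp (Tendsto.const_mul_atTop (by norm_num : (0:ℝ) < 1/2) hsq)
    refine this.congr fun x => ?_
    simp only [Function.comp]; ring
  simpa using (Real.tendsto_exp_atBot.comp h1).mul_const (Real.sqrt (2 * Real.pi))⁻¹

lemma integrable_mul_stdPhi : Integrable (fun u => u * stdPhi u) := by
  rw [stdPhi_eq]
  have := (integrable_mul_exp_neg_mul_sq (by norm_num : (0:ℝ) < 1/2)).mul_const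
    (Real.sqrt (2 * Real.pi))⁻¹
  exact this.congr (Filter.Eventually.of_forall fun x => by ring)

lemma stdCDF_pos (x : ℝ) : 0 < stdCDF x := by
  rw [stdCDF, setIntegral_pos_iff_support_of_nonneg_ae
    (Filter.Eventually.of_forall fun u => (stdPhi_pos u).le) integrable_stdPhi.integrableOn]
  have hsupp : Function.support stdPhi = Set.univ := by
    ext u; simp [Function.mem_support, (stdPhi_pos u).ne']
  rw [hsupp, Set.univ_inter]
  simp [Real.volume_Iic]

lemma hasDerivAt_stdCDF (x : ℝ) : HasDerivAt stdCDF (stdPhi x) x := by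
  have key : ∀ y : ℝ, stdCDF y = stdCDF 0 + ∫ t in (0:ℝ)..y, stdPhi t := by
    intro y
    rw [← intervalIntegral.integral_Iic_sub_Iic integrable_stdPhi.integrableOn
      integrable_stdPhi.integrableOn]
    simp [stdCDF]
  have h : HasDerivAt (fun y => stdCDF 0 + ∫ t in (0:ℝ)..y, stdPhi t) (stdPhi x) x := by
    apply HasDerivAt.const_add
    exact intervalIntegral.integral_hasDerivAt_right
      integrable_stdPhi.intervalIntegrable
      (continuous_stdPhi.stronglyMeasurableAtFilter _ _)
      continuous_stdPhi.continuousAt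
  exact h.congr_of_eventuallyEq (Filter.Eventually.of_forall fun y => (key y))

lemma integral_mul_stdPhi (v : ℝ) : ∫ u in Set.Iic v, u * stdPhi u = -stdPhi v := by
  have := integral_Iic_of_hasDerivAt_of_tendsto'
    (f := fun u => -stdPhi u) (f' := fun u => u * stdPhi u) (a := v) (m := 0)
    (fun x _ => by have h := (hasDerivAt_stdPhi x).neg; simp only [neg_mul, neg_neg] at h; exact h)
    integrable_mul_stdPhi.integrableOn
    (by simpa using tendsto_stdPhi_atBot.neg)
  simpa using this

lemma key_pos (v : ℝ) : 0 < v * stdCDF v + stdPhi v := by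
  have heq : v * stdCDF v + stdPhi v = ∫ u in Set.Iic v, (v - u) * stdPhi u := by
    rw [show (fun u => (v - u) * stdPhi u) = fun u => v * stdPhi u - u * stdPhi u from
      funext fun u => by ring]
    rw [integral_sub (integrable_stdPhi.integrableOn.const_mul v) integrable_mul_stdPhi.integrableOn,
      integral_const_mul, integral_mul_stdPhi, stdCDF]
    ring
  rw [heq, setIntegral_pos_iff_support_of_nonneg_ae]
  · have hsub : Set.Iio v ⊆ Function.support (fun u => (v - u) * stdPhi u) ∩ Set.Iic v := by
      intro u hu
      refine ⟨?_, le_of_lt (mem_Iio.mp hu)⟩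
      simp only [Function.mem_support]
      exact ne_of_gt (mul_pos (by linarith [hu.out]) (stdPhi_pos u))
    refine lt_of_lt_of_le ?_ (measure_mono hsub)
    simp [Real.volume_Iio]
  · rw [Filter.EventuallyLE, ae_restrict_iff' measurableSet_Iic]
    exact Filter.Eventually.of_forall fun u hu =>
      mul_nonneg (by linarith [hu.out]) (stdPhi_pos u).le
  · exact ((integrable_stdPhi.const_mul v).sub integrable_mul_stdPhi).integrableOn.congr_fun
      (fun u _ => by simp [Pi.sub_apply]; ring) measurableSet_Iic

lemma deriv_log_stdCDF : deriv (fun x => Real.log (stdCDF x)) = fun v => stdPhi v / stdCDF v := by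
  funext v
  exact ((hasDerivAt_stdCDF v).log (stdCDF_pos v).ne').deriv

lemma deriv2_log_stdCDF_neg (v : ℝ) :
    deriv (deriv (fun x => Real.log (stdCDF x))) v < 0 := by
  rw [deriv_log_stdCDF]
  have h : HasDerivAt (fun v => stdPhi v / stdCDF v)
      ((-v * stdPhi v * stdCDF v - stdPhi v * stdPhi v) / (stdCDF v) ^ 2) v :=
    (hasDerivAt_stdPhi v).div (hasDerivAt_stdCDF v) (stdCDF_pos v).ne'
  rw [h.deriv]
  apply div_neg_of_neg_of_pos
  · have := key_pos v
    nlinarith [stdPhi_pos v]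
  · exact pow_pos (stdCDF_pos v) 2

theorem stmt_4 :
    (∀ v : ℝ, deriv (deriv (fun x => Real.log (stdCDF x))) v < 0) ∧
      StrictConcaveOn ℝ Set.univ (fun x => Real.log (stdCDF x)) := by
  refine ⟨deriv2_log_stdCDF_neg, ?_⟩
  apply strictConcaveOn_of_deriv2_neg convex_univ
  · apply Continuous.continuousOn
    rw [continuous_iff_continuousAt]
    exact fun x => ((hasDerivAt_stdCDF x).log (stdCDF_pos x).ne').continuousAt
  · intro x _
    have : deriv^[2] (fun x => Real.log (stdCDF x)) x
        = deriv (deriv (fun x => Real.log (stdCDF x))) x := rfl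
    rw [this]
    exact deriv2_log_stdCDF_neg x
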